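/- arXiv:2303.04913 — 5 statements merged into one kernel-verified Lean document; each statement's English description precedes it below -/
import Mathlib

section
/- Let 0 ≤ ε ≤ 1/(2r) and let H be an r×r Hermitian positive definite matrix with Hᵀ·H = I and |H_{ij}| ≤ ε·H_{ii}^{1/2}·H_{jj}^{1/2} for all i ≠ j. Then setting A = Σ_j H_{jj}, one has H_{ii} ≤ ε·A + 1 for every i, and consequently A ≤ 2r. -/
open scoped ComplexOrder
open Finset

/-
Column `i` of `Hᵀ H = 1` reads `H_ii² + ∑_{j ≠ i} H_ji² = 1`, with `H_ii` real and positive.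
The off-diagonal bound gives `Re (H_ji²) ≥ -ε² H_ii H_jj`, hence `H_ii² ≤ 1 + ε H_ii A`
(as `ε ≤ 1`), and this quadratic inequality forces `H_ii ≤ εA + 1`. Summing over `i` gives
`A ≤ r (εA + 1)`, and `εr ≤ 1/2` turns this into `A ≤ 2r`.
-/

theorem Complex.neg_sq_norm_le_re_mul_self (z : ℂ) : -‖z‖ ^ 2 ≤ (z * z).re := by
  have h := Complex.abs_re_le_norm (z * z)
  rw [norm_mul] at h
  rw [sq]
  exact (abs_le.mp h).1

theorem le_add_one_of_sq_le_one_add_mul {x b : ℝ} (hb : 0 ≤ b) (h : x ^ 2 ≤ 1 + b * x) :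
    x ≤ b + 1 := by
  nlinarith

theorem sum_le_two_mul_card_of_le_mul_sum_add_one {ι : Type*} [Fintype ι] {a : ι → ℝ}
    {ε : ℝ} (ha : 0 ≤ ∑ i, a i) (hε : ε * Fintype.card ι ≤ 1 / 2)
    (h : ∀ i, a i ≤ ε * ∑ j, a j + 1) :
    ∑ i, a i ≤ 2 * Fintype.card ι := by
  have hsum : ∑ i, a i ≤ Fintype.card ι * (ε * ∑ j, a j + 1) := by
    calc ∑ i, a i ≤ ∑ _i : ι, (ε * ∑ j, a j + 1) := sum_le_sum fun i _ => h i
      _ = _ := by simp; ring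
  nlinarith

namespace Matrix

variable {n : Type*} [Fintype n] [DecidableEq n] {H : Matrix n n ℂ} {ε : ℝ}

theorem sum_re_mul_self_col_eq_one (horth : Hᵀ * H = 1) (i : n) :
    ∑ j, (H j i * H j i).re = 1 := by
  have h := congrArg Complex.re (congrFun (congrFun horth i) i)
  simpa only [mul_apply, transpose_apply, one_apply_eq, Complex.re_sum, Complex.one_re] using h

theorem sq_re_diag_le_of_transpose_mul_self_eq_one (horth : Hᵀ * H = 1)
    (hdiag : ∀ j, 0 ≤ H j j)
    (hoff : ∀ i j, i ≠ j → ‖H i j‖ ≤ ε * Real.sqrt ((H i i).re * (H j j).re)) (i : n) :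
    (H i i).re ^ 2 ≤ 1 + ε ^ 2 * (∑ j, (H j j).re) * (H i i).re := by
  have hre (j : n) : 0 ≤ (H j j).re := (Complex.nonneg_iff.mp (hdiag j)).1
  have hcol := sum_re_mul_self_col_eq_one horth i
  rw [← add_sum_erase _ _ (mem_univ i)] at hcol
  have hii : (H i i * H i i).re = (H i i).re ^ 2 := by
    simp [Complex.mul_re, ← (Complex.nonneg_iff.mp (hdiag i)).2, sq]
  have hterm : ∀ j ∈ univ.erase i,
      -(ε ^ 2 * (H i i).re * (H j j).re) ≤ (H j i * H j i).re := by
    intro j hj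
    have hsq : ‖H j i‖ ^ 2 ≤ ε ^ 2 * (H i i).re * (H j j).re := by
      calc ‖H j i‖ ^ 2 ≤ (ε * Real.sqrt ((H j j).re * (H i i).re)) ^ 2 :=
            pow_le_pow_left₀ (norm_nonneg _) (hoff j i (ne_of_mem_erase hj)) 2
        _ = ε ^ 2 * (H i i).re * (H j j).re := by
            rw [mul_pow, Real.sq_sqrt (mul_nonneg (hre j) (hre i))]; ring
    exact (neg_le_neg hsq).trans (Complex.neg_sq_norm_le_re_mul_self _)
  calc (H i i).re ^ 2 = 1 - ∑ j ∈ univ.erase i, (H j i * H j i).re := by linarith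
    _ ≤ 1 + ∑ j ∈ univ.erase i, ε ^ 2 * (H i i).re * (H j j).re := by
        have := sum_le_sum hterm
        rw [sum_neg_distrib] at this
        linarith
    _ = 1 + ε ^ 2 * (∑ j ∈ univ.erase i, (H j j).re) * (H i i).re := by rw [← mul_sum]; ring
    _ ≤ 1 + ε ^ 2 * (∑ j, (H j j).re) * (H i i).re := by
        have hsub := sum_le_sum_of_subset_of_nonneg (erase_subset i univ) fun j _ _ => hre j
        exact (add_le_add_iff_left 1).mpr <|
          mul_le_mul_of_nonneg_right (mul_le_mul_of_nonneg_left hsub (sq_nonneg ε)) (hre i)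

end Matrix

theorem stmt2_general (r : ℕ) (ε : ℝ) (hε0 : 0 ≤ ε) (hε : ε ≤ 1 / (2 * r))
    (H : Matrix (Fin r) (Fin r) ℂ) (hpos : H.PosDef) (horth : H.transpose * H = 1)
    (hoff : ∀ i j : Fin r, i ≠ j →
      ‖H i j‖ ≤ ε * Real.sqrt ((H i i).re * (H j j).re)) :
    (∀ i, (H i i).re ≤ ε * (∑ j, (H j j).re) + 1) ∧ (∑ j, (H j j).re) ≤ 2 * r := by
  have hdiag (i : Fin r) : 0 ≤ H i i := hpos.diag_pos.le
  have hA : 0 ≤ ∑ j, (H j j).re := sum_nonneg fun j _ => (Complex.nonneg_iff.mp (hdiag j)).1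
  have hεr : ε * r ≤ 1 / 2 := by
    have := mul_le_of_le_div₀ zero_le_one (by positivity) hε
    linarith
  have hbound (i : Fin r) : (H i i).re ≤ ε * (∑ j, (H j j).re) + 1 := by
    have hε1 : ε ^ 2 ≤ ε := by
      have : (1 : ℝ) ≤ r := by exact_mod_cast i.pos
      nlinarith
    refine le_add_one_of_sq_le_one_add_mul (by positivity) ?_
    calc (H i i).re ^ 2 ≤ 1 + ε ^ 2 * (∑ j, (H j j).re) * (H i i).re :=
          Matrix.sq_re_diag_le_of_transpose_mul_self_eq_one horth hdiag hoff i
      _ ≤ 1 + ε * (∑ j, (H j j).re) * (H i i).re := by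
          gcongr
          exact (Complex.nonneg_iff.mp (hdiag i)).1
  refine ⟨hbound, ?_⟩
  simpa using sum_le_two_mul_card_of_le_mul_sum_add_one hA (by simpa using hεr) hbound

/-- Let `0 ≤ ε ≤ 1/(2r)` and `H` an `r × r` Hermitian positive definite matrix with
`Hᵀ·H = 1` and `|H_{ij}| ≤ ε·(H_{ii} H_{jj})^{1/2}` for `i ≠ j`.  With `A = ∑_j H_{jj}`,
one has `H_{ii} ≤ ε·A + 1` for every `i`, and consequently `A ≤ 2r`. -/
theorem stmt2 (r : ℕ) (hr : 0 < r) (ε : ℝ) (hε0 : 0 ≤ ε) (hε : ε ≤ 1 / (2 * r))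
    (H : Matrix (Fin r) (Fin r) ℂ) (hpos : H.PosDef) (horth : H.transpose * H = 1)
    (hoff : ∀ i j : Fin r, i ≠ j →
      ‖H i j‖ ≤ ε * Real.sqrt ((H i i).re * (H j j).re)) :
    (∀ i, (H i i).re ≤ ε * (∑ j, (H j j).re) + 1) ∧ (∑ j, (H j j).re) ≤ 2 * r :=
  stmt2_general r ε hε0 hε H hpos horth hoff
end

section
/- Let 0 ≤ ε ≤ 1/(2r) and let H be an r×r Hermitian positive definite matrix with Hᵀ·H = I and |H_{ij}| ≤ ε·(H_{ii} H_{jj})^{1/2} for i ≠ j. Then |H_{ii} - 1| ≤ 4r²ε for every i, and |H_{ij}| ≤ ε(1 + 4r²ε) for all i ≠ j. -/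
open scoped ComplexOrder

/-!
Write `dᵢ = Hᵢᵢ` (real and positive) and `A = ∑ dᵢ`. The diagonal of `Hᵀ H = 1` reads
`Hᵢᵢ² - 1 = -∑_{j ≠ i} Hⱼᵢ²`, so the off-diagonal bound gives `|dᵢ² - 1| ≤ ε² dᵢ A`.
Summing, and using Cauchy–Schwarz `A² ≤ r ∑ dᵢ²`, gives `A² ≤ r² + r ε² A²`, hence `A ≤ 2r`.
Then `|dᵢ - 1| ≤ |dᵢ² - 1| ≤ ε A² ≤ 4r²ε`, and the off-diagonal bound follows from
`dᵢ, dⱼ ≤ 1 + 4r²ε`.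
-/

open Finset

lemma abs_sub_one_le_abs_sq_sub_one {x : ℝ} (hx : 0 ≤ x) : |x - 1| ≤ |x ^ 2 - 1| := by
  rw [show x ^ 2 - 1 = (x - 1) * (x + 1) by ring, abs_mul, abs_of_pos (by linarith : 0 < x + 1)]
  exact le_mul_of_one_le_right (abs_nonneg _) (by linarith)

section AlmostUnitDiagonal

variable {ι : Type*} [Fintype ι] {d : ι → ℝ} {ε : ℝ}

lemma sum_le_two_mul_card_of_abs_sq_sub_one_le (hε : 4 * Fintype.card ι * ε ^ 2 ≤ 3)
    (h : ∀ i, |d i ^ 2 - 1| ≤ ε ^ 2 * d i * ∑ j, d j) :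
    ∑ j, d j ≤ 2 * Fintype.card ι := by
  set A := ∑ j, d j
  set r : ℝ := (Fintype.card ι : ℝ)
  have hsq : ∑ j, d j ^ 2 ≤ r + ε ^ 2 * A ^ 2 := by
    calc ∑ j, d j ^ 2 ≤ ∑ j, (1 + ε ^ 2 * d j * A) := sum_le_sum fun j _ => by
          linarith [(abs_le.mp (h j)).2]
      _ = r + ε ^ 2 * A ^ 2 := by
          rw [sum_add_distrib, ← sum_mul, ← mul_sum, sum_const, card_univ, nsmul_one]; ring
  have hCS : A ^ 2 ≤ r * ∑ j, d j ^ 2 := by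
    simpa [r] using sq_sum_le_card_mul_sum_sq (s := univ) (f := d)
  have hr : 0 ≤ r := Nat.cast_nonneg _
  have : A ^ 2 ≤ (2 * r) ^ 2 := by
    nlinarith [mul_le_mul_of_nonneg_left hsq hr, mul_le_mul_of_nonneg_right hε (sq_nonneg A)]
  exact (abs_le_of_sq_le_sq' this (by positivity)).2

lemma abs_sub_one_le_of_abs_sq_sub_one_le (hd : 0 ≤ d) (hε0 : 0 ≤ ε)
    (hε : 2 * Fintype.card ι * ε ≤ 1) (h : ∀ i, |d i ^ 2 - 1| ≤ ε ^ 2 * d i * ∑ j, d j) (i : ι) :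
    |d i - 1| ≤ 4 * Fintype.card ι ^ 2 * ε := by
  set A := ∑ j, d j
  set r : ℝ := (Fintype.card ι : ℝ)
  have hr : 1 ≤ r := Nat.one_le_cast.mpr (Fintype.card_pos_iff.mpr ⟨i⟩)
  have hε1 : ε ≤ 1 := by nlinarith
  have hA : A ≤ 2 * r := sum_le_two_mul_card_of_abs_sq_sub_one_le (by nlinarith) h
  have hdA : d i ≤ A := single_le_sum (fun j _ => hd j) (mem_univ i)
  have hA0 : 0 ≤ A := (hd i).trans hdA
  calc |d i - 1| ≤ |d i ^ 2 - 1| := abs_sub_one_le_abs_sq_sub_one (hd i)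
    _ ≤ ε ^ 2 * d i * A := h i
    _ ≤ ε * A * A := by
        rw [sq, mul_assoc ε]; gcongr; exact mul_le_of_le_one_left (hd i) hε1 |>.trans hdA
    _ ≤ ε * (2 * r) * (2 * r) := by gcongr
    _ = 4 * r ^ 2 * ε := by ring

end AlmostUnitDiagonal

namespace Matrix

variable {ι : Type*}

lemma IsHermitian.ofReal_re_diag {H : Matrix ι ι ℂ} (hH : H.IsHermitian) (i : ι) :
    ((H i i).re : ℂ) = H i i := by
  simpa using hH.coe_re_apply_self i

lemma PosDef.re_diag_pos {H : Matrix ι ι ℂ} (hH : H.PosDef) (i : ι) : 0 < (H i i).re := by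
  rw [← Complex.zero_lt_real, hH.isHermitian.ofReal_re_diag]
  exact hH.diag_pos

variable [Fintype ι] [DecidableEq ι]

lemma norm_sq_diag_sub_one_le_of_transpose_mul_self {𝕜 : Type*} [NormedField 𝕜]
    {H : Matrix ι ι 𝕜} (h : Hᵀ * H = 1) (i : ι) :
    ‖H i i ^ 2 - 1‖ ≤ ∑ j ∈ univ.erase i, ‖H j i‖ ^ 2 := by
  have hdiag : ∑ j, H j i * H j i = 1 := by
    simpa [mul_apply] using congrFun (congrFun h i) i
  rw [← add_sum_erase _ _ (mem_univ i)] at hdiag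
  calc ‖H i i ^ 2 - 1‖ = ‖∑ j ∈ univ.erase i, H j i ^ 2‖ := by
        rw [← norm_neg, ← hdiag]; simp only [sq]; congr 1; ring
    _ ≤ ∑ j ∈ univ.erase i, ‖H j i ^ 2‖ := norm_sum_le _ _
    _ = ∑ j ∈ univ.erase i, ‖H j i‖ ^ 2 := by simp only [norm_pow]

lemma sum_erase_norm_sq_le {α : Type*} [SeminormedAddGroup α] {H : Matrix ι ι α} {d : ι → ℝ}
    {ε : ℝ} (hd : 0 ≤ d) (hoff : ∀ i j, i ≠ j → ‖H i j‖ ≤ ε * √(d i * d j)) (i : ι) :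
    ∑ j ∈ univ.erase i, ‖H j i‖ ^ 2 ≤ ε ^ 2 * d i * ∑ j, d j := by
  calc ∑ j ∈ univ.erase i, ‖H j i‖ ^ 2 ≤ ∑ j ∈ univ.erase i, ε ^ 2 * d i * d j := by
        refine sum_le_sum fun j hj => ?_
        calc ‖H j i‖ ^ 2 ≤ (ε * √(d j * d i)) ^ 2 := by
              gcongr; exact hoff j i (ne_of_mem_erase hj)
          _ = ε ^ 2 * d i * d j := by
              rw [mul_pow, Real.sq_sqrt (mul_nonneg (hd j) (hd i))]; ring
    _ ≤ ε ^ 2 * d i * ∑ j, d j := by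
        rw [mul_sum]
        exact sum_le_sum_of_subset_of_nonneg (erase_subset _ _) fun j _ _ =>
          mul_nonneg (mul_nonneg (sq_nonneg ε) (hd i)) (hd j)

lemma IsHermitian.abs_sq_re_diag_sub_one_le {H : Matrix ι ι ℂ} (hH : H.IsHermitian)
    (h : Hᵀ * H = 1) (i : ι) :
    |(H i i).re ^ 2 - 1| ≤ ∑ j ∈ univ.erase i, ‖H j i‖ ^ 2 := by
  have := norm_sq_diag_sub_one_le_of_transpose_mul_self h i
  rwa [← hH.ofReal_re_diag i, ← Complex.ofReal_pow, ← Complex.ofReal_one, ← Complex.ofReal_sub,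
    Complex.norm_real, Real.norm_eq_abs] at this

end Matrix

theorem stmt3_general (r : ℕ) (ε : ℝ) (hε0 : 0 ≤ ε) (hε : ε ≤ 1 / (2 * r))
    (H : Matrix (Fin r) (Fin r) ℂ) (hpos : H.PosDef) (horth : H.transpose * H = 1)
    (hoff : ∀ i j : Fin r, i ≠ j →
      ‖H i j‖ ≤ ε * Real.sqrt ((H i i).re * (H j j).re)) :
    (∀ i, |(H i i).re - 1| ≤ 4 * r ^ 2 * ε) ∧
    (∀ i j : Fin r, i ≠ j → ‖H i j‖ ≤ ε * (1 + 4 * r ^ 2 * ε)) := by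
  set d : Fin r → ℝ := fun i => (H i i).re
  have hd : 0 ≤ d := fun i => (hpos.re_diag_pos i).le
  have hdiag (i : Fin r) : |d i ^ 2 - 1| ≤ ε ^ 2 * d i * ∑ j, d j :=
    (hpos.isHermitian.abs_sq_re_diag_sub_one_le horth i).trans
      (Matrix.sum_erase_norm_sq_le hd hoff i)
  have hεr : 2 * Fintype.card (Fin r) * ε ≤ 1 := by
    rw [Fintype.card_fin]; linarith [mul_le_of_le_div₀ zero_le_one (by positivity) hε]
  have hclose := abs_sub_one_le_of_abs_sq_sub_one_le hd hε0 hεr hdiag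
  simp only [Fintype.card_fin] at hclose
  have hdle (i : Fin r) : d i ≤ 1 + 4 * r ^ 2 * ε := by linarith [(abs_le.mp (hclose i)).2]
  refine ⟨hclose, fun i j hij => (hoff i j hij).trans ?_⟩
  gcongr
  calc √(d i * d j) ≤ √((1 + 4 * r ^ 2 * ε) * (1 + 4 * r ^ 2 * ε)) :=
        Real.sqrt_le_sqrt (mul_le_mul (hdle i) (hdle j) (hd j) (by positivity))
    _ = 1 + 4 * r ^ 2 * ε := Real.sqrt_mul_self (by positivity)

/-- Let `0 ≤ ε ≤ 1/(2r)` and `H` an `r × r` Hermitian positive definite matrix with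
`Hᵀ·H = 1` and `|H_{ij}| ≤ ε·(H_{ii} H_{jj})^{1/2}` for `i ≠ j`.  Then
`|H_{ii} - 1| ≤ 4r²ε` for every `i`, and `|H_{ij}| ≤ ε(1 + 4r²ε)` for all `i ≠ j`. -/
theorem stmt3 (r : ℕ) (hr : 0 < r) (ε : ℝ) (hε0 : 0 ≤ ε) (hε : ε ≤ 1 / (2 * r))
    (H : Matrix (Fin r) (Fin r) ℂ) (hpos : H.PosDef) (horth : H.transpose * H = 1)
    (hoff : ∀ i j : Fin r, i ≠ j →
      ‖H i j‖ ≤ ε * Real.sqrt ((H i i).re * (H j j).re)) :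
    (∀ i, |(H i i).re - 1| ≤ 4 * r ^ 2 * ε) ∧
    (∀ i j : Fin r, i ≠ j → ‖H i j‖ ≤ ε * (1 + 4 * r ^ 2 * ε)) :=
  stmt3_general r ε hε0 hε H hpos horth hoff
end

section
/- Let (V, θ) be a rank-one Higgs bundle on a punctured disc U* with flat metric h, and suppose the Chern connection of h is flat. There exists a holomorphic non-degenerate symmetric pairing C of V compatible with h if and only if the monodromy of the Chern connection of h is 1 or −1. -/
/-- The punctured unit disc `U* = {z : 0 < |z| < 1}`. -/
def pdisc : Set ℂ := {z : ℂ | z ≠ 0 ∧ ‖z‖ < 1}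

/-!
In the trivialization, a compatible pairing is a nowhere-vanishing holomorphic `c` with
`|c| = H = |z|^(2a) · |exp g|`, so `c · exp (-g)` is holomorphic on `U*` with modulus `|z|^(2a)`,
while the monodromy `exp (2πia)` is `±1` exactly when `2a ∈ ℤ`. If `2a ∈ ℤ`, take
`c = z^(2a) · exp g`. Conversely, if `|f| = |z|^t` with `f` holomorphic on a punctured
neighbourhood of `0` and `t ∉ ℤ`, then `F = f · z^(-⌊t⌋)` has `|F| = |z|^e` with `0 < e < 1`.
So `F → 0`, the singularity is removable, and the extension vanishes at `0`; but then
`|F z / z| = |z|^(e - 1)` is unbounded, contradicting differentiability at `0`.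
-/

open Filter Topology

theorem not_eventually_norm_eq_rpow_of_differentiableAt {𝕜 E : Type*}
    [NontriviallyNormedField 𝕜] [NormedAddCommGroup E] [NormedSpace 𝕜 E]
    {G : 𝕜 → E} {e : ℝ} (he : e < 1) (hG : DifferentiableAt 𝕜 G 0) (hG0 : G 0 = 0) :
    ¬ ∀ᶠ z in 𝓝[≠] 0, ‖G z‖ = ‖z‖ ^ e := by
  intro hnorm
  obtain ⟨C, hC⟩ := hG.isBigO_sub.bound
  have hbdd : ∀ᶠ z in 𝓝[≠] (0 : 𝕜), ‖z‖ ^ (e - 1) ≤ C := by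
    filter_upwards [hnorm, nhdsWithin_le_nhds hC, self_mem_nhdsWithin] with z hz hCz hz0
    have hpos : 0 < ‖z‖ := norm_pos_iff.2 hz0
    rw [Real.rpow_sub_one hpos.ne', div_le_iff₀ hpos, ← hz]
    simpa [hG0] using hCz
  have hunbdd : Tendsto (fun z : 𝕜 => ‖z‖ ^ (e - 1)) (𝓝[≠] 0) atTop :=
    (tendsto_rpow_neg_nhdsGT_zero (by linarith)).comp tendsto_norm_nhdsNE_zero
  exact (hunbdd.eventually_gt_atTop C).and hbdd |>.exists.elim fun z hz => hz.1.not_ge hz.2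

theorem tendsto_zero_of_norm_eq_rpow {𝕜 E : Type*} [NormedField 𝕜] [NormedAddCommGroup E]
    {F : 𝕜 → E} {e : ℝ} (he : 0 < e) (hF : ∀ᶠ z in 𝓝[≠] 0, ‖F z‖ = ‖z‖ ^ e) :
    Tendsto F (𝓝[≠] 0) (𝓝 0) := by
  rw [tendsto_zero_iff_norm_tendsto_zero]
  refine Tendsto.congr' (EventuallyEq.symm hF) ?_
  have : Tendsto (fun z : 𝕜 => ‖z‖ ^ e) (𝓝 0) (𝓝 (‖(0 : 𝕜)‖ ^ e)) :=
    (continuous_norm.tendsto 0).rpow_const (Or.inr he.le)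
  simpa [Real.zero_rpow he.ne'] using this.mono_left nhdsWithin_le_nhds

theorem Complex.not_eventually_norm_eq_rpow {F : ℂ → ℂ} {e : ℝ} (he₀ : 0 < e) (he₁ : e < 1)
    (hF : ∀ᶠ z in 𝓝[≠] 0, DifferentiableAt ℂ F z) :
    ¬ ∀ᶠ z in 𝓝[≠] 0, ‖F z‖ = ‖z‖ ^ e := by
  intro hnorm
  classical
  set G := Function.update F 0 0
  have hGF : G =ᶠ[𝓝[≠] 0] F := Function.update_eventuallyEq_nhdsNE F 0 0 0
  have hG : AnalyticAt ℂ G 0 := by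
    refine analyticAt_of_differentiable_on_punctured_nhds_of_continuousAt ?_ ?_
    · filter_upwards [hF, self_mem_nhdsWithin] with z hz hz0
      refine hz.congr_of_eventuallyEq ?_
      filter_upwards [eventually_ne_nhds hz0] with w hw using Function.update_of_ne hw _ _
    · exact continuousAt_update_same.2 (tendsto_zero_of_norm_eq_rpow he₀ hnorm)
  refine not_eventually_norm_eq_rpow_of_differentiableAt he₁ hG.differentiableAt
    (Function.update_self ..) ?_
  filter_upwards [hGF, hnorm] with z h1 h2 using h1 ▸ h2

theorem Complex.exists_intCast_eq_of_norm_eq_rpow {f : ℂ → ℂ} {t : ℝ}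
    (hf : ∀ᶠ z in 𝓝[≠] 0, DifferentiableAt ℂ f z) (hnorm : ∀ᶠ z in 𝓝[≠] 0, ‖f z‖ = ‖z‖ ^ t) :
    ∃ n : ℤ, (n : ℝ) = t := by
  refine ⟨⌊t⌋, ?_⟩
  by_contra hne
  refine not_eventually_norm_eq_rpow (Int.fract_pos.2 (Ne.symm hne)) (Int.fract_lt_one t)
    (F := fun z => f z * z ^ (-⌊t⌋)) ?_ ?_
  · filter_upwards [hf, self_mem_nhdsWithin] with z hz hz0
    exact hz.mul (differentiableAt_zpow.2 (Or.inl hz0))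
  · filter_upwards [hnorm, self_mem_nhdsWithin] with z hz hz0
    have hpos : 0 < ‖z‖ := norm_pos_iff.2 hz0
    rw [norm_mul, norm_zpow, hz, ← Real.rpow_intCast, ← Real.rpow_add hpos, Int.fract]
    push_cast
    ring_nf

theorem Complex.exp_two_pi_mul_I_eq_one_or_neg_one_iff (a : ℝ) :
    (Complex.exp (2 * Real.pi * a * Complex.I) = 1 ∨
      Complex.exp (2 * Real.pi * a * Complex.I) = -1) ↔ ∃ n : ℤ, (n : ℝ) = 2 * a := by
  rw [← sq_eq_one_iff, ← Complex.exp_nat_mul, Complex.exp_eq_one_iff]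
  have h2pi : 2 * Real.pi * Complex.I ≠ 0 := by simp [Real.pi_ne_zero]
  have hlhs : ((2 : ℕ) : ℂ) * (2 * Real.pi * a * Complex.I) =
      ((2 * a : ℝ) : ℂ) * (2 * Real.pi * Complex.I) := by
    push_cast
    ring
  rw [hlhs]
  refine exists_congr fun n => ?_
  rw [mul_left_inj' h2pi, ← Complex.ofReal_intCast, Complex.ofReal_inj, eq_comm]

theorem isOpen_pdisc : IsOpen pdisc :=
  isOpen_compl_singleton.inter (isOpen_lt continuous_norm continuous_const)

theorem pdisc_mem_nhdsNE : pdisc ∈ 𝓝[≠] (0 : ℂ) :=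
  mem_nhdsWithin.2 ⟨Metric.ball 0 1, Metric.isOpen_ball, Metric.mem_ball_self one_pos,
    fun z hz => ⟨hz.2, by simpa using hz.1⟩⟩

/-- Let `(V, θ)` be a rank-one Higgs bundle on the punctured disc (trivialized, so a
Hermitian metric is a positive function `H`), with `h` flat: `log H` is harmonic, i.e.
`H = exp(2a·log|z| + Re g)` for some `a : ℝ` and holomorphic `g`.  The monodromy of the
Chern connection is `exp(2πia)`.  Then there exists a holomorphic non-degenerate symmetric
pairing `C` of `V` compatible with `h` (a nowhere-vanishing holomorphic function `c` with
`|c| = H`) if and only if the monodromy is `1` or `-1`. -/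
theorem stmt10 (a : ℝ) (g : ℂ → ℂ) (H : ℂ → ℝ)
    (hg : DifferentiableOn ℂ g pdisc)
    (hH : ∀ z ∈ pdisc, H z = Real.exp (2 * a * Real.log ‖z‖ + (g z).re)) :
    (∃ c : ℂ → ℂ, DifferentiableOn ℂ c pdisc ∧ (∀ z ∈ pdisc, c z ≠ 0) ∧
        (∀ z ∈ pdisc, ‖c z‖ = H z)) ↔
      (Complex.exp (2 * Real.pi * a * Complex.I) = 1 ∨
       Complex.exp (2 * Real.pi * a * Complex.I) = -1) := by
  have hH_rpow : ∀ z ∈ pdisc, H z = ‖z‖ ^ (2 * a) * Real.exp (g z).re := fun z hz => by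
    rw [hH z hz, Real.exp_add, Real.rpow_def_of_pos (norm_pos_iff.2 hz.1), mul_comm (Real.log _)]
  rw [Complex.exp_two_pi_mul_I_eq_one_or_neg_one_iff]
  constructor
  · rintro ⟨c, hc, -, hcH⟩
    refine Complex.exists_intCast_eq_of_norm_eq_rpow (f := fun z => c z * Complex.exp (-g z)) ?_ ?_
    · filter_upwards [pdisc_mem_nhdsNE] with z hz
      exact (hc.mul hg.neg.cexp).differentiableAt (isOpen_pdisc.mem_nhds hz)
    · filter_upwards [pdisc_mem_nhdsNE] with z hz
      rw [norm_mul, hcH z hz, hH_rpow z hz, Complex.norm_exp, Complex.neg_re, Real.exp_neg,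
        mul_assoc, mul_inv_cancel₀ (Real.exp_pos _).ne', mul_one]
  · rintro ⟨n, hn⟩
    refine ⟨fun z => z ^ n * Complex.exp (g z), ?_, ?_, ?_⟩
    · exact DifferentiableOn.mul
        (fun z hz => (differentiableAt_zpow.2 (Or.inl hz.1)).differentiableWithinAt) hg.cexp
    · exact fun z hz => mul_ne_zero (zpow_ne_zero _ hz.1) (Complex.exp_ne_zero _)
    · intro z hz
      rw [norm_mul, norm_zpow, Complex.norm_exp, hH_rpow z hz, ← hn, Real.rpow_intCast]
end

section
/- Let (V, θ) be a regular semisimple Higgs bundle of rank r on a Riemann surface Y, with spectral covering π : Σ → Y an r-sheeted covering map, and let L be the line bundle on Σ with π_*L ≅ V inducing θ. Then pushforward of metrics induces a bijection between flat Hermitian metrics on L and decoupled harmonic metrics on (V, θ). -/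
attribute [local instance] Classical.propDecidable

open Matrix
open scoped ComplexOrder

/-- A system of `r` holomorphic sections over `U` enumerating, without repetition, the
fibers of the spectral covering `S ⊆ Y × ℂ ⊆ T*Y` (first coordinate: base point, second
coordinate: eigenvalue of the Higgs field).  Injectivity of `i ↦ s i z` encodes regular
semisimplicity (the `r` eigenvalues are pairwise distinct). -/
def IsSectionSystem (r : ℕ) (S : Set (ℂ × ℂ)) (U : Set ℂ) (s : Fin r → ℂ → ℂ) : Prop :=
  (∀ i, DifferentiableOn ℂ (s i) U) ∧
  (∀ i, ∀ z ∈ U, (z, s i z) ∈ S) ∧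
  (∀ z ∈ U, ∀ q ∈ S, q.1 = z → ∃ i, q = (z, s i z)) ∧
  (∀ z ∈ U, Function.Injective fun i => s i z)

/-- The Gram matrix of a Hermitian pairing `h` on `V = π_*L` in the local holomorphic
frame given by a section system. -/
noncomputable def gramMatrix (r : ℕ) (h : ℂ × ℂ → ℂ × ℂ → ℂ) (s : Fin r → ℂ → ℂ)
    (z : ℂ) : Matrix (Fin r) (Fin r) ℂ :=
  Matrix.of fun i j => h (z, s i z) (z, s j z)

/-- Flatness of the Chern connection of `h` on `U`: locally the Gram matrix is
`Gᴴ·G` with `G` holomorphic and invertible (existence of local parallel holomorphic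
orthonormal frames), i.e. `R(h) = 0`. -/
def IsFlatGram (r : ℕ) (h : ℂ × ℂ → ℂ × ℂ → ℂ) (s : Fin r → ℂ → ℂ) (U : Set ℂ) : Prop :=
  ∀ z ∈ U, ∃ V ∈ nhds z, ∃ G : ℂ → Matrix (Fin r) (Fin r) ℂ,
    (∀ i j, DifferentiableOn ℂ (fun w => G w i j) (V ∩ U)) ∧
    ∀ w ∈ V ∩ U, IsUnit (G w).det ∧ gramMatrix r h s w = (G w)ᴴ * G w

/-- `h` is a decoupled harmonic metric of the regular semisimple Higgs bundle
`(V, θ) = π_*(L, eigenvalue)`: in every local holomorphic eigenframe, the Gram matrix `M`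
is positive definite, the Chern connection is flat (`R(h) = 0`), and `[θ, θ†_h] = 0`,
i.e. `D` commutes with `θ†_h = M⁻¹·Dᴴ·M` where `D = diag(eigenvalues)`. -/
def IsDecoupledHarmonicMetric (r : ℕ) (S : Set (ℂ × ℂ)) (Y : Set ℂ)
    (h : ℂ × ℂ → ℂ × ℂ → ℂ) : Prop :=
  ∀ U : Set ℂ, IsOpen U → U ⊆ Y → ∀ s : Fin r → ℂ → ℂ, IsSectionSystem r S U s →
    (∀ z ∈ U, (gramMatrix r h s z).PosDef) ∧
    IsFlatGram r h s U ∧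
    (∀ z ∈ U,
      Matrix.diagonal (fun i => s i z) *
        ((gramMatrix r h s z)⁻¹ * (Matrix.diagonal fun i => s i z)ᴴ * gramMatrix r h s z)
      = ((gramMatrix r h s z)⁻¹ * (Matrix.diagonal fun i => s i z)ᴴ * gramMatrix r h s z) *
          Matrix.diagonal (fun i => s i z))

/-- A flat metric on the line bundle `L` on the spectral curve `S`: a positive function
`H` on `S` which, pulled back by each local holomorphic section, is `exp(Re g)` with
`g` holomorphic (i.e. `log H` is harmonic: the Chern connection of `(L, H)` is flat). -/
def IsFlatLineMetric (r : ℕ) (S : Set (ℂ × ℂ)) (Y : Set ℂ) (H : ℂ × ℂ → ℝ) : Prop :=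
  ∀ U : Set ℂ, IsOpen U → U ⊆ Y → ∀ s : Fin r → ℂ → ℂ, IsSectionSystem r S U s →
    ∀ i, ∀ z ∈ U, ∃ V ∈ nhds z, ∃ g : ℂ → ℂ, DifferentiableOn ℂ g (V ∩ U) ∧
      ∀ w ∈ V ∩ U, H (w, s i w) = Real.exp ((g w).re)


/-!
In a local eigenframe the Gram matrix of `π_*H` is `diag(H ∘ sᵢ)`, and `H ∘ sᵢ = exp(Re gᵢ)`
makes `diag(exp(gᵢ/2))` a holomorphic frame with `M = GᴴG`. Conversely, for a decoupled
harmonic `h`, `[θ, θ†_h] = 0` with pairwise distinct eigenvalues forces the Gram matrix to be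
diagonal, so `h` is the pushforward of its diagonal; flatness `M = GᴴG` with `G` holomorphic
then makes each diagonal entry locally the modulus of a nonvanishing holomorphic function,
i.e. `exp(Re g)` for a local logarithm `g`.
-/

open Filter Topology

namespace Matrix

variable {n : Type*} [Fintype n] [DecidableEq n]

theorem apply_eq_zero_of_commute_diagonal {K : Type*} [CommRing K] [NoZeroDivisors K]
    {d : n → K} (hd : Function.Injective d) {B : Matrix n n K} (h : Commute (diagonal d) B)
    {i j : n} (hij : i ≠ j) : B i j = 0 := by
  have hij' : d i * B i j = B i j * d j := by
    simpa [diagonal_mul, mul_diagonal] using congrFun (congrFun h i) j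
  have : B i j * (d i - d j) = 0 := by linear_combination hij'
  exact (mul_eq_zero.mp this).resolve_right (sub_ne_zero.mpr (hd.ne hij))

/-- `M⁻¹ Dᴴ M` commuting with `D` first forces it to be diagonal, then (comparing diagonal
entries of `M (M⁻¹ Dᴴ M) = Dᴴ M`) to equal `Dᴴ`; so `M` itself commutes with `Dᴴ`. -/
theorem apply_eq_zero_of_commute_diagonal_conj {K : Type*} [Field K] [StarRing K]
    {d : n → K} (hd : Function.Injective d) {M : Matrix n n K} (hM : IsUnit M.det)
    (hMdiag : ∀ i, M i i ≠ 0) (h : Commute (diagonal d) (M⁻¹ * (diagonal d)ᴴ * M))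
    {i j : n} (hij : i ≠ j) : M i j = 0 := by
  set B := M⁻¹ * (diagonal d)ᴴ * M
  have hMB : M * B = diagonal (star d) * M := by
    rw [← diagonal_conjTranspose, ← Matrix.mul_assoc, ← Matrix.mul_assoc,
      mul_nonsing_inv _ hM, Matrix.one_mul]
  have hB : B = diagonal (star d) := by
    ext k l
    by_cases hkl : k = l
    · subst hkl
      have hkk := congrFun (congrFun hMB k) k
      rw [mul_apply, Finset.sum_eq_single k (fun l _ hl => by
          rw [apply_eq_zero_of_commute_diagonal hd h hl, mul_zero])
        (by simp), diagonal_mul, mul_comm] at hkk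
      rw [diagonal_apply_eq]
      exact mul_right_cancel₀ (hMdiag k) hkk
    · rw [apply_eq_zero_of_commute_diagonal hd h hkl, diagonal_apply_ne _ hkl]
  have hcomm : Commute (diagonal (star d)) M := (hB ▸ hMB).symm
  exact apply_eq_zero_of_commute_diagonal (star_injective.comp hd) hcomm hij

theorem star_apply_mul_det_of_conjTranspose_mul_self_eq_diagonal {K : Type*} [Field K]
    [StarRing K] {G : Matrix n n K} {d : n → K} (hG : IsUnit G.det)
    (h : Gᴴ * G = diagonal d) (i k : n) : star (G k i) * G.det = d i * G.adjugate i k := by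
  have hGH : Gᴴ = diagonal d * G⁻¹ := by
    rw [← h, Matrix.mul_assoc, mul_nonsing_inv _ hG, Matrix.mul_one]
  have := congrFun (congrFun hGH i) k
  rw [conjTranspose_apply, diagonal_mul, inv_def, smul_apply, Ring.inverse_eq_inv',
    smul_eq_mul] at this
  rw [this]
  field_simp [hG.ne_zero]

end Matrix

section Holomorphic

variable {𝕜 𝔸 n : Type*} [NontriviallyNormedField 𝕜] [NormedCommRing 𝔸] [NormedAlgebra 𝕜 𝔸]
  [Fintype n] [DecidableEq n] {A : 𝕜 → Matrix n n 𝔸} {s : Set 𝕜}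

theorem DifferentiableOn.matrix_det (hA : ∀ i j, DifferentiableOn 𝕜 (fun w => A w i j) s) :
    DifferentiableOn 𝕜 (fun w => (A w).det) s := by
  simp only [Matrix.det_apply']
  exact .fun_sum fun σ _ => (DifferentiableOn.fun_finsetProd fun i _ => hA (σ i) i).const_mul _

theorem DifferentiableOn.matrix_adjugate_apply
    (hA : ∀ i j, DifferentiableOn 𝕜 (fun w => A w i j) s) (i k : n) :
    DifferentiableOn 𝕜 (fun w => (A w).adjugate i k) s := by
  simp only [Matrix.adjugate_apply]
  refine .matrix_det fun a b => ?_
  by_cases hak : a = k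
  · simp [Matrix.updateRow_apply, hak]
  · simpa [Matrix.updateRow_apply, hak] using hA a b

end Holomorphic

/-- A holomorphic logarithm of `c • f` for a unimodular `c` rotating `f z` onto the
positive axis. -/
theorem exists_norm_eq_exp_re {f : ℂ → ℂ} {W : Set ℂ} {z : ℂ} (hW : W ∈ 𝓝 z)
    (hf : DifferentiableOn ℂ f W) (hfz : f z ≠ 0) :
    ∃ V ∈ 𝓝 z, ∃ g : ℂ → ℂ, DifferentiableOn ℂ g V ∧ ∀ w ∈ V, ‖f w‖ = Real.exp (g w).re := by
  set c : ℂ := (‖f z‖ : ℂ) / f z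
  have hc : ‖c‖ = 1 := by
    rw [norm_div, Complex.norm_real, norm_norm, div_self (norm_ne_zero_iff.mpr hfz)]
  have hcfz : c * f z ∈ Complex.slitPlane := by
    rw [div_mul_cancel₀ _ hfz]
    exact Complex.ofReal_mem_slitPlane.mpr (norm_pos_iff.mpr hfz)
  have hcont : ContinuousAt (fun w => c * f w) z :=
    continuousAt_const.mul (hf.continuousOn.continuousAt hW)
  refine ⟨W ∩ (fun w => c * f w) ⁻¹' Complex.slitPlane,
    inter_mem hW (hcont.preimage_mem_nhds (Complex.isOpen_slitPlane.mem_nhds hcfz)),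
    fun w => Complex.log (c * f w), fun w hw => ?_, fun w hw => ?_⟩
  · exact (Complex.differentiableAt_log hw.2).comp_differentiableWithinAt w
      (((hf w hw.1).mono Set.inter_subset_left).const_mul c)
  · have hw0 : f w ≠ 0 := right_ne_zero_of_mul (Complex.slitPlane_ne_zero hw.2)
    rw [Complex.log_re, norm_mul, hc, one_mul, Real.exp_log (norm_pos_iff.mpr hw0)]

/-- The identity `conj (G k i) · det G = m i · adj(G) i k` exhibits `m i` as the modulus
of the holomorphic function `G k i · det G / adj(G) i k`. -/
theorem exists_eq_exp_re_of_conjTranspose_mul_self_eq_diagonal {n : Type*} [Fintype n]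
    [DecidableEq n] {G : ℂ → Matrix n n ℂ} {m : ℂ → n → ℝ} {W : Set ℂ} {z : ℂ}
    (hW : W ∈ 𝓝 z) (hG : ∀ i j, DifferentiableOn ℂ (fun w => G w i j) W)
    (hdet : ∀ w ∈ W, IsUnit (G w).det)
    (hgram : ∀ w ∈ W, (G w)ᴴ * G w = diagonal fun j => (m w j : ℂ)) {i : n}
    (hm : ∀ w ∈ W, 0 < m w i) :
    ∃ V ∈ 𝓝 z, ∃ g : ℂ → ℂ, DifferentiableOn ℂ g V ∧ ∀ w ∈ V, m w i = Real.exp (g w).re := by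
  have hzW : z ∈ W := mem_of_mem_nhds hW
  obtain ⟨k, hk⟩ : ∃ k, G z k i ≠ 0 := by
    by_contra! hcol
    exact (hdet z hzW).ne_zero (det_eq_zero_of_column_eq_zero i hcol)
  set adj : ℂ → ℂ := fun w => (G w).adjugate i k
  have hid : ∀ w ∈ W, star (G w k i) * (G w).det = m w i * adj w := fun w hw =>
    star_apply_mul_det_of_conjTranspose_mul_self_eq_diagonal (hdet w hw) (hgram w hw) i k
  have hadj : DifferentiableOn ℂ adj W := .matrix_adjugate_apply hG i k
  have hadjz : adj z ≠ 0 := by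
    intro h0
    have := hid z hzW
    rw [h0, mul_zero] at this
    exact mul_ne_zero (star_ne_zero.mpr hk) (hdet z hzW).ne_zero this
  set f : ℂ → ℂ := fun w => G w k i * (G w).det / adj w
  have hnorm : ∀ w ∈ W, adj w ≠ 0 → ‖f w‖ = m w i := fun w hw hw0 => by
    have := congrArg norm (hid w hw)
    rw [norm_mul, norm_mul, norm_star, Complex.norm_real, Real.norm_of_nonneg (hm w hw).le]
      at this
    rw [norm_div, norm_mul, this, mul_div_cancel_right₀ _ (norm_ne_zero_iff.mpr hw0)]
  set W' := W ∩ {w | adj w ≠ 0}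
  have hW' : W' ∈ 𝓝 z :=
    inter_mem hW ((hadj.continuousOn.continuousAt hW).eventually_ne hadjz)
  have hf : DifferentiableOn ℂ f W' :=
    (((hG k i).mul (.matrix_det hG)).mono Set.inter_subset_left).div
      (hadj.mono Set.inter_subset_left) fun _ hw => hw.2
  have hfz : f z ≠ 0 := by
    rw [← norm_ne_zero_iff, hnorm z hzW hadjz]
    exact (hm z hzW).ne'
  obtain ⟨V, hV, g, hg, hfg⟩ := exists_norm_eq_exp_re hW' hf hfz
  refine ⟨V ∩ W', inter_mem hV hW', g, hg.mono Set.inter_subset_left, fun w hw => ?_⟩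
  rw [← hfg w hw.1, hnorm w hw.2.1 hw.2.2]

/-- The orthogonal direct sum metric `π_*(H)` on `V = π_*L`. -/
noncomputable def pushforwardMetric (S : Set (ℂ × ℂ)) (H : ℂ × ℂ → ℝ) :
    ℂ × ℂ → ℂ × ℂ → ℂ :=
  fun q q' => if q = q' ∧ q ∈ S then ((H q : ℝ) : ℂ) else 0

noncomputable def diagonalMetric (S : Set (ℂ × ℂ)) (h : ℂ × ℂ → ℂ × ℂ → ℂ) : ℂ × ℂ → ℝ :=
  fun q => if q ∈ S then (h q q).re else 1

section SpectralCover

variable {r : ℕ} {S : Set (ℂ × ℂ)} {Y U : Set ℂ} {s : Fin r → ℂ → ℂ} {z : ℂ}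

theorem pushforwardMetric_eq_conj (H : ℂ × ℂ → ℝ) (q q' : ℂ × ℂ) :
    pushforwardMetric S H q q' = starRingEnd ℂ (pushforwardMetric S H q' q) := by
  unfold pushforwardMetric
  by_cases hq : q = q'
  · subst hq
    split_ifs <;> simp
  · rw [if_neg fun h => hq h.1, if_neg fun h => hq h.1.symm, map_zero]

theorem pushforwardMetric_eq_zero (H : ℂ × ℂ → ℝ) {q q' : ℂ × ℂ}
    (h : q ∉ S ∨ q' ∉ S ∨ q.1 ≠ q'.1) : pushforwardMetric S H q q' = 0 := by
  refine if_neg ?_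
  rintro ⟨rfl, hq⟩
  tauto

theorem pushforwardMetric_injOn :
    Set.InjOn (pushforwardMetric S) {H | ∀ q ∉ S, H q = 1} := by
  intro H₁ h₁ H₂ h₂ heq
  funext q
  by_cases hq : q ∈ S
  · have := congrFun (congrFun heq q) q
    simp only [pushforwardMetric, true_and, if_pos hq] at this
    exact_mod_cast this
  · rw [h₁ q hq, h₂ q hq]

theorem IsSectionSystem.gramMatrix_pushforwardMetric (hs : IsSectionSystem r S U s)
    (hz : z ∈ U) (H : ℂ × ℂ → ℝ) :
    gramMatrix r (pushforwardMetric S H) s z = diagonal fun i => (H (z, s i z) : ℂ) := by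
  ext i j
  by_cases hij : i = j
  · subst hij
    simp [gramMatrix, pushforwardMetric, hs.2.1 i z hz]
  · rw [diagonal_apply_ne _ hij]
    refine if_neg ?_
    rintro ⟨he, -⟩
    exact hij (hs.2.2.2 z hz (congrArg Prod.snd he))

theorem isFlatGram_pushforwardMetric {H : ℂ × ℂ → ℝ} (hH : IsFlatLineMetric r S Y H)
    (hU : IsOpen U) (hUY : U ⊆ Y) (hs : IsSectionSystem r S U s) :
    IsFlatGram r (pushforwardMetric S H) s U := by
  intro z hz
  choose V hV g hg hHg using fun i => hH U hU hUY s hs i z hz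
  have hVU : ∀ i, (⋂ j, V j) ∩ U ⊆ V i ∩ U :=
    fun i => Set.inter_subset_inter_left U (Set.iInter_subset V i)
  refine ⟨⋂ i, V i, iInter_mem.mpr hV,
    fun w => diagonal fun i => Complex.exp (g i w / 2), fun i j => ?_, fun w hw => ⟨?_, ?_⟩⟩
  · by_cases hij : i = j
    · subst hij
      simpa using (((hg i).mono (hVU i)).div_const 2).cexp
    · simp [diagonal_apply_ne _ hij, differentiableOn_const]
  · simp [det_diagonal, Finset.prod_ne_zero_iff, Complex.exp_ne_zero]
  · rw [hs.gramMatrix_pushforwardMetric hw.2, diagonal_conjTranspose,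
      diagonal_mul_diagonal]
    congr 1
    funext i
    rw [hHg i w (hVU i hw), Pi.star_apply, Complex.star_def, ← Complex.exp_conj,
      ← Complex.exp_add, Complex.ofReal_exp]
    congr 1
    apply Complex.ext <;> simp [map_div₀, map_ofNat]
    ring

theorem isDecoupledHarmonicMetric_pushforwardMetric {H : ℂ × ℂ → ℝ} (hpos : ∀ q ∈ S, 0 < H q)
    (hH : IsFlatLineMetric r S Y H) : IsDecoupledHarmonicMetric r S Y (pushforwardMetric S H) := by
  intro U hU hUY s hs
  refine ⟨fun z hz => ?_, isFlatGram_pushforwardMetric hH hU hUY hs, fun z hz => ?_⟩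
  · rw [hs.gramMatrix_pushforwardMetric hz, posDef_diagonal_iff]
    exact fun i => Complex.zero_lt_real.mpr (hpos _ (hs.2.1 i z hz))
  · simp only [hs.gramMatrix_pushforwardMetric hz, inv_diagonal, diagonal_conjTranspose,
      diagonal_mul_diagonal]
    congr 1
    funext i
    ring

namespace IsDecoupledHarmonicMetric

variable {h : ℂ × ℂ → ℂ × ℂ → ℂ} (hdec : IsDecoupledHarmonicMetric r S Y h)
include hdec

theorem gramMatrix_eq (hsym : ∀ q q', h q q' = starRingEnd ℂ (h q' q)) (hU : IsOpen U)
    (hUY : U ⊆ Y) (hs : IsSectionSystem r S U s) (hz : z ∈ U) :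
    gramMatrix r h s z = diagonal fun i => (diagonalMetric S h (z, s i z) : ℂ) := by
  obtain ⟨hpos, -, hcomm⟩ := hdec U hU hUY s hs
  ext i j
  by_cases hij : i = j
  · subst hij
    rw [diagonal_apply_eq, diagonalMetric, if_pos (hs.2.1 i z hz)]
    exact (Complex.conj_eq_iff_re.mp (hsym _ _).symm).symm
  · rw [diagonal_apply_ne _ hij]
    exact apply_eq_zero_of_commute_diagonal_conj (hs.2.2.2 z hz) (hpos z hz).det_pos.ne'.isUnit
      (fun i => (hpos z hz).diag_pos.ne') (hcomm z hz) hij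

theorem diagonalMetric_pos_of_isSectionSystem (hsym : ∀ q q', h q q' = starRingEnd ℂ (h q' q))
    (hU : IsOpen U) (hUY : U ⊆ Y) (hs : IsSectionSystem r S U s) (hz : z ∈ U) (i : Fin r) :
    0 < diagonalMetric S h (z, s i z) := by
  have hpos := (hdec U hU hUY s hs).1 z hz
  rw [hdec.gramMatrix_eq hsym hU hUY hs hz, posDef_diagonal_iff] at hpos
  exact Complex.zero_lt_real.mp (hpos i)

theorem diagonalMetric_pos (hsym : ∀ q q', h q q' = starRingEnd ℂ (h q' q))
    (hS : ∀ q ∈ S, q.1 ∈ Y)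
    (hcov : ∀ y ∈ Y, ∃ U : Set ℂ, IsOpen U ∧ y ∈ U ∧ U ⊆ Y ∧
      ∃ s : Fin r → ℂ → ℂ, IsSectionSystem r S U s) :
    ∀ q ∈ S, 0 < diagonalMetric S h q := by
  intro q hq
  obtain ⟨U, hU, hzU, hUY, s, hs⟩ := hcov q.1 (hS q hq)
  obtain ⟨i, hi⟩ := hs.2.2.1 q.1 hzU q hq rfl
  rw [hi]
  exact hdec.diagonalMetric_pos_of_isSectionSystem hsym hU hUY hs hzU i

theorem isFlatLineMetric_diagonalMetric (hsym : ∀ q q', h q q' = starRingEnd ℂ (h q' q)) :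
    IsFlatLineMetric r S Y (diagonalMetric S h) := by
  intro U hU hUY s hs i z hz
  obtain ⟨V, hV, G, hG, hGgram⟩ := (hdec U hU hUY s hs).2.1 z hz
  obtain ⟨V', hV', g, hg, hgm⟩ := exists_eq_exp_re_of_conjTranspose_mul_self_eq_diagonal
    (m := fun w j => diagonalMetric S h (w, s j w)) (inter_mem hV (hU.mem_nhds hz)) hG
    (fun w hw => (hGgram w hw).1)
    (fun w hw => (hGgram w hw).2 ▸ hdec.gramMatrix_eq hsym hU hUY hs hw.2)
    (fun w hw => hdec.diagonalMetric_pos_of_isSectionSystem hsym hU hUY hs hw.2 i)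
  exact ⟨V', hV', g, hg.mono Set.inter_subset_left, fun w hw => hgm w hw.1⟩

theorem pushforwardMetric_diagonalMetric (hsym : ∀ q q', h q q' = starRingEnd ℂ (h q' q))
    (hvan : ∀ q q' : ℂ × ℂ, (q ∉ S ∨ q' ∉ S ∨ q.1 ≠ q'.1) → h q q' = 0)
    (hS : ∀ q ∈ S, q.1 ∈ Y)
    (hcov : ∀ y ∈ Y, ∃ U : Set ℂ, IsOpen U ∧ y ∈ U ∧ U ⊆ Y ∧
      ∃ s : Fin r → ℂ → ℂ, IsSectionSystem r S U s) :
    pushforwardMetric S (diagonalMetric S h) = h := by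
  funext q q'
  unfold pushforwardMetric
  split_ifs with hqq'
  · obtain ⟨rfl, hq⟩ := hqq'
    rw [diagonalMetric, if_pos hq]
    exact Complex.conj_eq_iff_re.mp (hsym q q).symm
  by_cases hfib : q ∈ S ∧ q' ∈ S ∧ q.1 = q'.1
  · obtain ⟨hq, hq', hqq⟩ := hfib
    obtain ⟨U, hU, hzU, hUY, s, hs⟩ := hcov q.1 (hS q hq)
    obtain ⟨i, hi⟩ := hs.2.2.1 q.1 hzU q hq rfl
    obtain ⟨j, hj⟩ := hs.2.2.1 q.1 hzU q' hq' hqq.symm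
    have hij : i ≠ j := fun e => hqq' ⟨by rw [hi, hj, e], hq⟩
    have := congrFun (congrFun (hdec.gramMatrix_eq hsym hU hUY hs hzU) i) j
    rw [diagonal_apply_ne _ hij] at this
    rw [hi, hj]
    exact this.symm
  · exact (hvan q q' (by tauto)).symm

end IsDecoupledHarmonicMetric

end SpectralCover

theorem stmt15_general (r : ℕ) (S : Set (ℂ × ℂ)) (Y : Set ℂ)
    (hS : ∀ q ∈ S, q.1 ∈ Y)
    (hcov : ∀ y ∈ Y, ∃ U : Set ℂ, IsOpen U ∧ y ∈ U ∧ U ⊆ Y ∧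
      ∃ s : Fin r → ℂ → ℂ, IsSectionSystem r S U s) :
    Set.BijOn
      (fun H : ℂ × ℂ → ℝ => fun q q' : ℂ × ℂ =>
        if q = q' ∧ q ∈ S then ((H q : ℝ) : ℂ) else 0)
      {H : ℂ × ℂ → ℝ | (∀ q ∈ S, 0 < H q) ∧ (∀ q ∉ S, H q = 1) ∧
        IsFlatLineMetric r S Y H}
      {h : ℂ × ℂ → ℂ × ℂ → ℂ | (∀ q q', h q q' = starRingEnd ℂ (h q' q)) ∧
        (∀ q q' : ℂ × ℂ, (q ∉ S ∨ q' ∉ S ∨ q.1 ≠ q'.1) → h q q' = 0) ∧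
        IsDecoupledHarmonicMetric r S Y h} := by
  change Set.BijOn (pushforwardMetric S) _ _
  refine ⟨?_, pushforwardMetric_injOn.mono fun H hH => hH.2.1, ?_⟩
  · rintro H ⟨hpos, -, hflat⟩
    exact ⟨pushforwardMetric_eq_conj H, fun _ _ => pushforwardMetric_eq_zero H,
      isDecoupledHarmonicMetric_pushforwardMetric hpos hflat⟩
  · rintro h ⟨hsym, hvan, hdec⟩
    exact ⟨diagonalMetric S h,
      ⟨hdec.diagonalMetric_pos hsym hS hcov, fun q hq => if_neg hq,
        hdec.isFlatLineMetric_diagonalMetric hsym⟩,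
      hdec.pushforwardMetric_diagonalMetric hsym hvan hS hcov⟩

/-- Let `(V, θ)` be a regular semisimple Higgs bundle of rank `r` on `Y`, with spectral
covering `π : S → Y` an `r`-sheeted covering (encoded by local holomorphic section
systems) and `L` the line bundle on `S` with `π_*L ≅ V` inducing `θ`.  Then pushforward
of metrics, `H ↦ (h : h(q,q') = H q` if `q = q' ∈ S`, else `0)` — the orthogonal direct
sum metric — is a bijection from flat Hermitian metrics on `L` (normalized by `H = 1`
off `S`) onto decoupled harmonic metrics on `(V, θ)` (normalized to vanish off pairs of
points of `S` in a common fiber). -/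
theorem stmt15 (r : ℕ) (hr : 0 < r) (S : Set (ℂ × ℂ)) (Y : Set ℂ) (hY : IsOpen Y)
    (hS : ∀ q ∈ S, q.1 ∈ Y)
    (hcov : ∀ y ∈ Y, ∃ U : Set ℂ, IsOpen U ∧ y ∈ U ∧ U ⊆ Y ∧
      ∃ s : Fin r → ℂ → ℂ, IsSectionSystem r S U s) :
    Set.BijOn
      (fun H : ℂ × ℂ → ℝ => fun q q' : ℂ × ℂ =>
        if q = q' ∧ q ∈ S then ((H q : ℝ) : ℂ) else 0)
      {H : ℂ × ℂ → ℝ | (∀ q ∈ S, 0 < H q) ∧ (∀ q ∉ S, H q = 1) ∧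
        IsFlatLineMetric r S Y H}
      {h : ℂ × ℂ → ℂ × ℂ → ℂ | (∀ q q', h q q' = starRingEnd ℂ (h q' q)) ∧
        (∀ q q' : ℂ × ℂ, (q ∉ S ∨ q' ∉ S ∨ q.1 ≠ q'.1) → h q q' = 0) ∧
        IsDecoupledHarmonicMetric r S Y h} :=
  stmt15_general r S Y hS hcov
end

section
/- Let (V, θ, h) be a decoupled harmonic bundle on a Riemann surface, with spectral curve decomposing into connected components Σ = ⊔_{i∈Λ} Σ_i. Then the corresponding Higgs bundle decomposition (V,θ) = ⊕_{i∈Λ}(V_i, θ_i) with Σ_{V_i,θ_i} = Σ_i is orthogonal with respect to h. -/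
open Matrix
open scoped ComplexOrder

/-! Two points of `S` in the same fibre but in different components are distinct eigenvalues
`d i ≠ d j` of `θ = diagonal d` there, so it suffices that the Gram matrix `M` of `h` in the
eigenframe has vanishing off-diagonal entries. Since `d` is injective, `[θ, θ†_h] = 0` forces
`θ†_h = M⁻¹ dᴴ M` to be diagonal; as `M i i > 0`, the diagonal entries of `M θ†_h = dᴴ M`
identify `θ†_h` with `star d`, and then `(star (d j) - star (d i)) * M i j = 0`. -/

namespace Matrix

variable {n R : Type*} [Fintype n] [DecidableEq n]

theorem isDiag_of_diagonal_mul_eq_mul_diagonal [CommRing R] [NoZeroDivisors R] {d : n → R}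
    (hd : Function.Injective d) {C : Matrix n n R} (h : diagonal d * C = C * diagonal d) :
    C.IsDiag := by
  intro a b hab
  have hentry := congr_fun₂ h a b
  rw [diagonal_mul, mul_diagonal] at hentry
  have : (d a - d b) * C a b = 0 := by linear_combination hentry
  exact (mul_eq_zero.1 this).resolve_left (sub_ne_zero.2 (hd.ne hab))

theorem apply_eq_zero_of_mul_diagonal_eq_diagonal_mul [CommRing R] [NoZeroDivisors R]
    {M : Matrix n n R} (hM : ∀ i, M i i ≠ 0) {c e : n → R} (he : Function.Injective e)
    (h : M * diagonal c = diagonal e * M) {i j : n} (hij : i ≠ j) : M i j = 0 := by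
  have hentry : ∀ a b, M a b * c b = e a * M a b := fun a b => by
    simpa only [mul_diagonal, diagonal_mul] using congr_fun₂ h a b
  have hc : c j = e j := mul_left_cancel₀ (hM j) ((hentry j j).trans (mul_comm _ _))
  have : (e j - e i) * M i j = 0 := by linear_combination hentry i j - M i j * hc
  exact (mul_eq_zero.1 this).resolve_left (sub_ne_zero.2 (he.ne hij.symm))

theorem PosDef.apply_eq_zero_of_commute_diagonal_adjoint {𝕜 : Type*} [RCLike 𝕜]
    {M : Matrix n n 𝕜} (hM : M.PosDef) {d : n → 𝕜} (hd : Function.Injective d)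
    (h : diagonal d * (M⁻¹ * (diagonal d)ᴴ * M) = (M⁻¹ * (diagonal d)ᴴ * M) * diagonal d)
    {i j : n} (hij : i ≠ j) : M i j = 0 := by
  have hC : (M⁻¹ * (diagonal d)ᴴ * M).IsDiag := isDiag_of_diagonal_mul_eq_mul_diagonal hd h
  have hMC : M * diagonal (M⁻¹ * (diagonal d)ᴴ * M).diag = diagonal (star d) * M := by
    rw [hC.diagonal_diag, ← diagonal_conjTranspose, Matrix.mul_assoc M⁻¹,
      mul_nonsing_inv_cancel_left M _ ((isUnit_iff_isUnit_det M).1 hM.isUnit)]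
  exact apply_eq_zero_of_mul_diagonal_eq_diagonal_mul (fun _ => hM.diag_pos.ne')
    (star_injective.comp hd) hMC hij

end Matrix

theorem IsDecoupledHarmonicMetric.gramMatrix_apply_eq_zero {r : ℕ} {S : Set (ℂ × ℂ)}
    {Y : Set ℂ} {h : ℂ × ℂ → ℂ × ℂ → ℂ} (hdec : IsDecoupledHarmonicMetric r S Y h)
    {U : Set ℂ} (hU : IsOpen U) (hUY : U ⊆ Y) {s : Fin r → ℂ → ℂ}
    (hs : IsSectionSystem r S U s) {z : ℂ} (hz : z ∈ U) {i j : Fin r} (hij : i ≠ j) :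
    gramMatrix r h s z i j = 0 := by
  obtain ⟨hpos, -, hcomm⟩ := hdec U hU hUY s hs
  exact (hpos z hz).apply_eq_zero_of_commute_diagonal_adjoint (hs.2.2.2 z hz) (hcomm z hz) hij

theorem stmt16_general (r : ℕ) (S : Set (ℂ × ℂ)) (Y : Set ℂ)
    (hS : ∀ q ∈ S, q.1 ∈ Y)
    (hcov : ∀ y ∈ Y, ∃ U : Set ℂ, IsOpen U ∧ y ∈ U ∧ U ⊆ Y ∧
      ∃ s : Fin r → ℂ → ℂ, IsSectionSystem r S U s)
    (h : ℂ × ℂ → ℂ × ℂ → ℂ)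
    (hdec : IsDecoupledHarmonicMetric r S Y h) :
    ∀ q ∈ S, ∀ q' ∈ S, q.1 = q'.1 →
      connectedComponentIn S q ≠ connectedComponentIn S q' → h q q' = 0 := by
  intro q hq q' hq' hfib hcomp
  obtain ⟨U, hU, hqU, hUY, s, hs⟩ := hcov q.1 (hS q hq)
  obtain ⟨i, hi⟩ := hs.2.2.1 q.1 hqU q hq rfl
  obtain ⟨j, hj⟩ := hs.2.2.1 q.1 hqU q' hq' hfib.symm
  have hij : i ≠ j := by
    rintro rfl
    exact hcomp (by rw [hi, hj])
  rw [hi, hj]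
  exact hdec.gramMatrix_apply_eq_zero hU hUY hs hqU hij

/-- Let `(V, θ, h)` be a decoupled harmonic bundle, with spectral curve `S` decomposing
into connected components `S = ⊔ S_i`.  The corresponding decomposition of the Higgs
bundle `(V, θ) = ⊕ (V_i, θ_i)` is orthogonal with respect to `h`: for any two points
`q, q'` of `S` in the same fiber of the spectral covering but in different connected
components of `S`, `h(q, q') = 0`. -/
theorem stmt16 (r : ℕ) (hr : 0 < r) (S : Set (ℂ × ℂ)) (Y : Set ℂ) (hY : IsOpen Y)
    (hS : ∀ q ∈ S, q.1 ∈ Y)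
    (hcov : ∀ y ∈ Y, ∃ U : Set ℂ, IsOpen U ∧ y ∈ U ∧ U ⊆ Y ∧
      ∃ s : Fin r → ℂ → ℂ, IsSectionSystem r S U s)
    (h : ℂ × ℂ → ℂ × ℂ → ℂ)
    (hherm : ∀ q q', h q q' = starRingEnd ℂ (h q' q))
    (hdec : IsDecoupledHarmonicMetric r S Y h) :
    ∀ q ∈ S, ∀ q' ∈ S, q.1 = q'.1 →
      connectedComponentIn S q ≠ connectedComponentIn S q' → h q q' = 0 :=
  stmt16_general r S Y hS hcov h hdec
end
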